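/- Let L = ℚ(a,b,c,d,e,k,l,m,n,p,q) be the field of rational functions over ℚ in the eleven indeterminates a,b,c,d,e,k,l,m,n,p,q, and work in L[x,y]. Set T₂ = a·x² + b·x·y + c·y² + d·x + e·y + 1, and let P = y·(k·y + l·x) + (p·y + q·x)·T₂ + (2a·x + b·y + d)·(−q·x² + (n−p)·x·y + m·y²) and Q = −x·(k·y + l·x) − (m·y + n·x)·T₂ + (b·x + 2c·y + e)·(−q·x² + (n−p)·x·y + m·y²) (a general member of Żołądek's family CR₁₆). Then the conic F = (m·q − n·p)·T₂ + (k·q − l·p)·x − (k·n − l·m)·y is an algebraic integral curve of P dx + Q dy: F divides P·∂F/∂y − Q·∂F/∂x in L[x,y]. -/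
import Mathlib


open MvPolynomial

/-- The field `L = ℚ(a,b,c,d,e,k,l,m,n,p,q)` of rational functions over `ℚ` in eleven
indeterminates, realized as the fraction field of `ℚ[a,b,c,d,e,k,l,m,n,p,q]`. -/
abbrev L16 : Type := FractionRing (MvPolynomial (Fin 11) ℚ)

/-- The `i`-th indeterminate parameter (in the order `a,b,c,d,e,k,l,m,n,p,q`),
viewed as a constant of the polynomial ring `L[x,y]`. -/
noncomputable def ct (i : Fin 11) : MvPolynomial (Fin 2) L16 :=
  C (algebraMap (MvPolynomial (Fin 11) ℚ) L16 (X i))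

namespace CR16conic

noncomputable def a := ct 0
noncomputable def b := ct 1
noncomputable def c := ct 2
noncomputable def d := ct 3
noncomputable def e := ct 4
noncomputable def k := ct 5
noncomputable def l := ct 6
noncomputable def m := ct 7
noncomputable def n := ct 8
noncomputable def p := ct 9
noncomputable def q := ct 10

noncomputable def x : MvPolynomial (Fin 2) L16 := X 0
noncomputable def y : MvPolynomial (Fin 2) L16 := X 1

/-- `T₂ = a·x² + b·x·y + c·y² + d·x + e·y + 1`. -/
noncomputable def T₂ : MvPolynomial (Fin 2) L16 :=
  a * x^2 + b * x * y + c * y^2 + d * x + e * y + 1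

/-- The coefficient polynomial of Żołądek's family `CR₁₆`. -/
noncomputable def P : MvPolynomial (Fin 2) L16 :=
  y * (k * y + l * x) + (p * y + q * x) * T₂
    + (2 * a * x + b * y + d) * (-(q * x^2) + (n - p) * x * y + m * y^2)

/-- The coefficient polynomial of Żołądek's family `CR₁₆`. -/
noncomputable def Q : MvPolynomial (Fin 2) L16 :=
  -(x * (k * y + l * x)) - (m * y + n * x) * T₂
    + (b * x + 2 * c * y + e) * (-(q * x^2) + (n - p) * x * y + m * y^2)

/-- The new conic of Proposition on `CR₁₆`:
`F = (mq − np)·T₂ + (kq − lp)·x − (kn − lm)·y`. -/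
noncomputable def F : MvPolynomial (Fin 2) L16 :=
  (m * q - n * p) * T₂ + (k * q - l * p) * x - (k * n - l * m) * y

/-- **The conic `F` is an algebraic integral curve of the general member of Żołądek's
family `CR₁₆`**: `F` divides `P·F_y − Q·F_x` in `L[x,y]`. -/
theorem conic_is_integral_curve : F ∣ P * pderiv 1 F - Q * pderiv 0 F := by
  use (k * y + l * x) + (m * y + n * x) * (2 * a * x + b * y + d)
      + (p * y + q * x) * (b * x + 2 * c * y + e)
  simp only [P, Q, F, T₂, a, b, c, d, e, k, l, m, n, p, q, x, y, ct,
    map_add, map_sub, map_neg, map_mul, pderiv_mul, pderiv_C, pderiv_X,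
    pderiv_pow, pderiv_one, map_one, Pi.single_eq_of_ne (by decide : (1:Fin 2) ≠ 0),
    Pi.single_eq_of_ne (by decide : (0:Fin 2) ≠ 1), Pi.single_eq_same]
  ring

end CR16conic
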